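/- arXiv:1503.03980 — 6 statements merged into one kernel-verified Lean document; each statement's English description precedes it below -/
import Mathlib

section
/- Let F : [0,1]² → ℝ be continuous and let μ* be a doubly stochastic measure on [0,1]² that maximizes ∫ F dμ over all doubly stochastic measures μ on [0,1]². Let C(x,y) = μ*([0,x]×[0,y]) be the associated copula. Suppose [X₁,X₂]×[Y₁,Y₂] ⊆ [0,1]² is a rectangle with C(X₂,Y₂) + C(X₁,Y₁) − C(X₁,Y₂) − C(X₂,Y₁) > 0, and suppose that at every point (x,y) of the open rectangle (X₁,X₂)×(Y₁,Y₂) the mixed second partial derivative ∂²F/∂x∂y exists and is strictly positive. Then for every (x,y) ∈ [X₁,X₂]×[Y₁,Y₂] one has C(x,y) = min( C(x,Y₂) + C(X₁,y) − C(X₁,Y₂), C(x,Y₁) + C(X₂,y) − C(X₂,Y₁) ). -/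
open MeasureTheory Set

/-- A doubly stochastic measure on `[0,1]²`: a Borel probability measure whose
marginals on both coordinates are Lebesgue measure on `[0,1]`. -/
def IsDoublyStochastic (μ : Measure (ℝ × ℝ)) : Prop :=
  IsProbabilityMeasure μ ∧
  (∀ B : Set ℝ, MeasurableSet B → B ⊆ Icc 0 1 → μ (B ×ˢ Icc (0:ℝ) 1) = volume B) ∧
  (∀ B : Set ℝ, MeasurableSet B → B ⊆ Icc 0 1 → μ (Icc (0:ℝ) 1 ×ˢ B) = volume B)

/-- The copula (distribution function) of a measure on `[0,1]²`. -/
noncomputable def copulaOf (μ : Measure (ℝ × ℝ)) (x y : ℝ) : ℝ :=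
  (μ (Icc 0 x ×ˢ Icc 0 y)).toReal


/-! If, around a point `(x, y)` of the rectangle, both the north-west quadrant
`(X₁, x) × (y, Y₂)` and the south-east quadrant `(x, X₂) × (Y₁, y)` carried `μ*`-mass, one could
couple these two pieces of `μ*` and exchange their second coordinates. This keeps both marginals,
and since a positive mixed derivative makes `F` strictly supermodular, it strictly increases
`∫ F`, contradicting optimality. So one of the quadrants is null; as the masses of the two
quadrants are the differences between the two right-hand sides and `C x y`, the minimum is
attained. -/

lemma Measurable.integrable_comp_of_norm_le {γ δ : Type*} [MeasurableSpace γ]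
    [MeasurableSpace δ] {m : Measure γ} [IsFiniteMeasure m] {G : δ → ℝ} {M : ℝ}
    (hG : Measurable G) (hGM : ∀ p, ‖G p‖ ≤ M) {f : γ → δ} (hf : Measurable f) :
    Integrable (fun x => G (f x)) m :=
  .of_bound (hG.comp hf).aestronglyMeasurable M (ae_of_all _ fun _ => hGM _)

namespace MeasureTheory.Measure

variable {α β : Type*} [MeasurableSpace α] [MeasurableSpace β]

noncomputable def exchange (κ : Measure ((α × β) × (α × β))) : Measure (α × β) :=
  κ.map (fun pq => (pq.1.1, pq.2.2)) + κ.map (fun pq => (pq.2.1, pq.1.2))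

def exchangeGain (G : α × β → ℝ) (pq : (α × β) × (α × β)) : ℝ :=
  G (pq.1.1, pq.2.2) + G (pq.2.1, pq.1.2) - G pq.1 - G pq.2

lemma map_fst_exchange (κ : Measure ((α × β) × (α × β))) :
    κ.exchange.map Prod.fst = (κ.map Prod.fst + κ.map Prod.snd).map Prod.fst := by
  rw [exchange, Measure.map_add _ _ measurable_fst, Measure.map_add _ _ measurable_fst,
    map_map, map_map, map_map, map_map] <;> first | rfl | fun_prop

lemma map_snd_exchange (κ : Measure ((α × β) × (α × β))) :
    κ.exchange.map Prod.snd = (κ.map Prod.fst + κ.map Prod.snd).map Prod.snd := by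
  rw [exchange, Measure.map_add _ _ measurable_snd, Measure.map_add _ _ measurable_snd,
    map_map, map_map, map_map, map_map, add_comm] <;> first | rfl | fun_prop

variable {μ : Measure (α × β)} {κ : Measure ((α × β) × (α × β))} [IsFiniteMeasure κ]
  {G : α × β → ℝ} {M : ℝ}

lemma integrable_exchangeGain (hG : Measurable G) (hGM : ∀ p, ‖G p‖ ≤ M) :
    Integrable (exchangeGain G) κ :=
  (((hG.integrable_comp_of_norm_le hGM (by fun_prop)).add
    (hG.integrable_comp_of_norm_le hGM (by fun_prop))).sub
      (hG.integrable_comp_of_norm_le hGM measurable_fst)).sub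
        (hG.integrable_comp_of_norm_le hGM measurable_snd)

lemma map_fst_sub_add_exchange (h : κ.map Prod.fst + κ.map Prod.snd ≤ μ) :
    (μ - (κ.map Prod.fst + κ.map Prod.snd) + κ.exchange).map Prod.fst = μ.map Prod.fst := by
  rw [Measure.map_add _ _ measurable_fst, map_fst_exchange, ← Measure.map_add _ _ measurable_fst,
    sub_add_cancel_of_le h]

lemma map_snd_sub_add_exchange (h : κ.map Prod.fst + κ.map Prod.snd ≤ μ) :
    (μ - (κ.map Prod.fst + κ.map Prod.snd) + κ.exchange).map Prod.snd = μ.map Prod.snd := by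
  rw [Measure.map_add _ _ measurable_snd, map_snd_exchange, ← Measure.map_add _ _ measurable_snd,
    sub_add_cancel_of_le h]

lemma integral_sub_add_exchange [IsFiniteMeasure μ] (h : κ.map Prod.fst + κ.map Prod.snd ≤ μ)
    (hG : Measurable G) (hGM : ∀ p, ‖G p‖ ≤ M) :
    ∫ p, G p ∂(μ - (κ.map Prod.fst + κ.map Prod.snd) + κ.exchange) =
      ∫ p, G p ∂μ + ∫ pq, exchangeGain G pq ∂κ := by
  have hint : ∀ (m : Measure (α × β)) [IsFiniteMeasure m], Integrable G m := fun _ _ =>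
    .of_bound hG.aestronglyMeasurable M (ae_of_all _ hGM)
  have hmap : ∀ f : (α × β) × (α × β) → α × β, Measurable f →
      ∫ p, G p ∂(κ.map f) = ∫ pq, G (f pq) ∂κ := fun _ hf =>
    integral_map hf.aemeasurable hG.aestronglyMeasurable
  have hμ : ∫ p, G p ∂μ = ∫ p, G p ∂(μ - (κ.map Prod.fst + κ.map Prod.snd))
      + (∫ p, G p ∂(κ.map Prod.fst) + ∫ p, G p ∂(κ.map Prod.snd)) := by
    conv_lhs => rw [← sub_add_cancel_of_le h]
    rw [integral_add_measure (hint _) (hint _), integral_add_measure (hint _) (hint _)]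
  have i₁ := hG.integrable_comp_of_norm_le (m := κ) hGM (f := fun pq => (pq.1.1, pq.2.2))
    (by fun_prop)
  have i₂ := hG.integrable_comp_of_norm_le (m := κ) hGM (f := fun pq => (pq.2.1, pq.1.2))
    (by fun_prop)
  have i₃ := hG.integrable_comp_of_norm_le (m := κ) hGM measurable_fst
  have i₄ := hG.integrable_comp_of_norm_le (m := κ) hGM measurable_snd
  rw [exchange, integral_add_measure (hint _) (hint _), integral_add_measure (hint _) (hint _),
    hmap _ (by fun_prop), hmap _ (by fun_prop)]
  rw [hmap _ measurable_fst, hmap _ measurable_snd] at hμ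
  unfold exchangeGain
  rw [integral_sub _ i₄, integral_sub _ i₃, integral_add i₁ i₂]
  · linarith
  exacts [i₁.add i₂, (i₁.add i₂).sub i₃]

end MeasureTheory.Measure

section Coupling

open Measure

variable {α β : Type*} [MeasurableSpace α] [MeasurableSpace β] {Q₁ Q₂ : Set (α × β)}

lemma map_fst_add_map_snd_prod_restrict_le (μ : Measure (α × β)) [IsProbabilityMeasure μ]
    (hQ₂ : MeasurableSet Q₂) (hdisj : Disjoint Q₁ Q₂) :
    ((μ.restrict Q₁).prod (μ.restrict Q₂)).map Prod.fst +
      ((μ.restrict Q₁).prod (μ.restrict Q₂)).map Prod.snd ≤ μ := by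
  have smul_le : ∀ (Q : Set (α × β)) (m : Measure (α × β)), μ Q • m ≤ m := fun Q m =>
    le_iff'.2 fun s => by simpa using mul_le_of_le_one_left' (a := m s) (prob_le_one (s := Q))
  rw [map_fst_prod, map_snd_prod, restrict_apply_univ, restrict_apply_univ]
  calc μ Q₂ • μ.restrict Q₁ + μ Q₁ • μ.restrict Q₂
      ≤ μ.restrict Q₁ + μ.restrict Q₂ := add_le_add (smul_le _ _) (smul_le _ _)
    _ = μ.restrict (Q₁ ∪ Q₂) := (restrict_union hdisj hQ₂).symm
    _ ≤ μ := restrict_le_self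

lemma integral_exchangeGain_prod_restrict_pos (μ : Measure (α × β)) [IsFiniteMeasure μ]
    {G : α × β → ℝ} {M : ℝ} (hG : Measurable G) (hGM : ∀ p, ‖G p‖ ≤ M)
    (hQ₁ : MeasurableSet Q₁) (hQ₂ : MeasurableSet Q₂) (hμQ₁ : μ Q₁ ≠ 0) (hμQ₂ : μ Q₂ ≠ 0)
    (hgain : ∀ p ∈ Q₁, ∀ q ∈ Q₂, G p + G q < G (p.1, q.2) + G (q.1, p.2)) :
    0 < ∫ pq, exchangeGain G pq ∂((μ.restrict Q₁).prod (μ.restrict Q₂)) := by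
  have hpos : ∀ pq ∈ Q₁ ×ˢ Q₂, 0 < exchangeGain G pq := fun pq hpq => by
    have := hgain _ hpq.1 _ hpq.2
    rw [exchangeGain]
    linarith
  have hnonneg : 0 ≤ᵐ[(μ.restrict Q₁).prod (μ.restrict Q₂)] exchangeGain G := by
    rw [prod_restrict]
    exact ae_restrict_of_forall_mem (hQ₁.prod hQ₂) fun pq hpq => (hpos pq hpq).le
  rw [integral_pos_iff_support_of_nonneg_ae hnonneg (integrable_exchangeGain hG hGM)]
  calc 0 < μ Q₁ * μ Q₂ := ENNReal.mul_pos hμQ₁ hμQ₂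
    _ = (μ.restrict Q₁).prod (μ.restrict Q₂) (Q₁ ×ˢ Q₂) := by
      rw [prod_prod, restrict_apply_self, restrict_apply_self]
    _ ≤ _ := measure_mono fun pq hpq => (hpos pq hpq).ne'

lemma exists_map_eq_integral_lt (μ : Measure (α × β)) [IsProbabilityMeasure μ]
    {G : α × β → ℝ} {M : ℝ} (hG : Measurable G) (hGM : ∀ p, ‖G p‖ ≤ M)
    (hQ₁ : MeasurableSet Q₁) (hQ₂ : MeasurableSet Q₂) (hdisj : Disjoint Q₁ Q₂)
    (hμQ₁ : μ Q₁ ≠ 0) (hμQ₂ : μ Q₂ ≠ 0)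
    (hgain : ∀ p ∈ Q₁, ∀ q ∈ Q₂, G p + G q < G (p.1, q.2) + G (q.1, p.2)) :
    ∃ ν : Measure (α × β), ν.map Prod.fst = μ.map Prod.fst ∧ ν.map Prod.snd = μ.map Prod.snd ∧
      ∫ p, G p ∂μ < ∫ p, G p ∂ν := by
  have hle := map_fst_add_map_snd_prod_restrict_le μ hQ₂ hdisj
  refine ⟨_, map_fst_sub_add_exchange hle, map_snd_sub_add_exchange hle, ?_⟩
  rw [integral_sub_add_exchange hle hG hGM, lt_add_iff_pos_right]
  exact integral_exchangeGain_prod_restrict_pos μ hG hGM hQ₁ hQ₂ hμQ₁ hμQ₂ hgain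

end Coupling

lemma measureReal_Ioc_prod_Ioc (μ : Measure (ℝ × ℝ)) [IsFiniteMeasure μ] {a b c d : ℝ}
    (hab : a ≤ b) (hcd : c ≤ d) :
    μ.real (Ioc a b ×ˢ Ioc c d) = μ.real (Iic b ×ˢ Iic d) - μ.real (Iic a ×ˢ Iic d)
      - μ.real (Iic b ×ˢ Iic c) + μ.real (Iic a ×ˢ Iic c) := by
  have hx : ∀ t : Set ℝ, MeasurableSet t →
      μ.real (Iic b ×ˢ t) = μ.real (Iic a ×ˢ t) + μ.real (Ioc a b ×ˢ t) := fun t ht => by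
    rw [← Iic_union_Ioc_eq_Iic hab, union_prod, measureReal_union
      (disjoint_prod.2 (.inl (Iic_disjoint_Ioc le_rfl))) (measurableSet_Ioc.prod ht)]
  have hy : μ.real (Ioc a b ×ˢ Iic d) =
      μ.real (Ioc a b ×ˢ Iic c) + μ.real (Ioc a b ×ˢ Ioc c d) := by
    rw [← Iic_union_Ioc_eq_Iic hcd, prod_union, measureReal_union
      (disjoint_prod.2 (.inr (Iic_disjoint_Ioc le_rfl))) (measurableSet_Ioc.prod measurableSet_Ioc)]
  linarith [hx (Iic d) measurableSet_Iic, hx (Iic c) measurableSet_Iic]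

local notation "𝕀" => Icc (0 : ℝ) 1

lemma isDoublyStochastic_of_map {ν : Measure (ℝ × ℝ)}
    (hfst : ν.map Prod.fst = volume.restrict 𝕀) (hsnd : ν.map Prod.snd = volume.restrict 𝕀) :
    IsDoublyStochastic ν := by
  have hcompl : ∀ {f : ℝ × ℝ → ℝ}, Measurable f → ν.map f = volume.restrict 𝕀 →
      ν (f ⁻¹' 𝕀)ᶜ = 0 := fun hf hmap => by
    rw [← preimage_compl, ← Measure.map_apply hf measurableSet_Icc.compl, hmap,
      Measure.restrict_apply' measurableSet_Icc, compl_inter_self, measure_empty]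
  have hpre : ∀ {f : ℝ × ℝ → ℝ}, Measurable f → ν.map f = volume.restrict 𝕀 →
      ∀ B, MeasurableSet B → B ⊆ 𝕀 → ν (f ⁻¹' B) = volume B := fun hf hmap B hB hBI => by
    rw [← Measure.map_apply hf hB, hmap, Measure.restrict_apply hB, inter_eq_left.2 hBI]
  refine ⟨⟨?_⟩, fun B hB hBI => ?_, fun B hB hBI => ?_⟩
  · rw [← preimage_univ (f := Prod.fst), ← Measure.map_apply measurable_fst MeasurableSet.univ,
      hfst, Measure.restrict_apply_univ, Real.volume_Icc, sub_zero, ENNReal.ofReal_one]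
  · rw [prod_eq, measure_inter_conull (hcompl measurable_snd hsnd),
      hpre measurable_fst hfst B hB hBI]
  · rw [prod_eq, inter_comm, measure_inter_conull (hcompl measurable_fst hfst),
      hpre measurable_snd hsnd B hB hBI]

namespace IsDoublyStochastic

variable {μ : Measure (ℝ × ℝ)}

lemma measure_compl_unitSquare (h : IsDoublyStochastic μ) : μ (𝕀 ×ˢ 𝕀)ᶜ = 0 := by
  have := h.1
  rw [prob_compl_eq_zero_iff (measurableSet_Icc.prod measurableSet_Icc),
    h.2.1 _ measurableSet_Icc subset_rfl, Real.volume_Icc, sub_zero, ENNReal.ofReal_one]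

lemma map_fst (h : IsDoublyStochastic μ) : μ.map Prod.fst = volume.restrict 𝕀 := by
  ext B hB
  rw [Measure.map_apply measurable_fst hB, Measure.restrict_apply hB,
    ← h.2.1 _ (hB.inter measurableSet_Icc) inter_subset_right,
    ← measure_inter_conull h.measure_compl_unitSquare]
  congr 1
  ext p
  simp only [mem_inter_iff, mem_preimage, mem_prod]
  tauto

lemma map_snd (h : IsDoublyStochastic μ) : μ.map Prod.snd = volume.restrict 𝕀 := by
  ext B hB
  rw [Measure.map_apply measurable_snd hB, Measure.restrict_apply hB,
    ← h.2.2 _ (hB.inter measurableSet_Icc) inter_subset_right,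
    ← measure_inter_conull h.measure_compl_unitSquare]
  congr 1
  ext p
  simp only [mem_inter_iff, mem_preimage, mem_prod]
  tauto

lemma copulaOf_eq (h : IsDoublyStochastic μ) (x y : ℝ) :
    copulaOf μ x y = μ.real (Iic x ×ˢ Iic y) := by
  rw [copulaOf, Measure.real, ← measure_inter_conull h.measure_compl_unitSquare,
    ← measure_inter_conull (s := Iic x ×ˢ Iic y) h.measure_compl_unitSquare]
  congr 2
  ext p
  simp only [mem_inter_iff, mem_prod, mem_Icc, mem_Iic]
  tauto

lemma measure_Ioo_prod_Ioo (h : IsDoublyStochastic μ) (a b c d : ℝ) :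
    μ (Ioo a b ×ˢ Ioo c d) = μ (Ioc a b ×ˢ Ioc c d) := by
  have hline : ∀ {f : ℝ × ℝ → ℝ}, Measurable f → μ.map f = volume.restrict 𝕀 →
      ∀ t, μ (f ⁻¹' {t}) = 0 := fun hf hmap t => by
    rw [← Measure.map_apply hf (measurableSet_singleton t), hmap]
    exact (Measure.restrict_apply_eq_zero' measurableSet_Icc).2
      (measure_mono_null inter_subset_left Real.volume_singleton)
  refine le_antisymm (measure_mono (prod_mono Ioo_subset_Ioc_self Ioo_subset_Ioc_self)) ?_
  calc μ (Ioc a b ×ˢ Ioc c d)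
      ≤ μ (Ioo a b ×ˢ Ioo c d ∪ (Prod.fst ⁻¹' {b} ∪ Prod.snd ⁻¹' {d})) := by
        refine measure_mono fun p ⟨⟨hp₁, hp₁'⟩, hp₂, hp₂'⟩ => ?_
        rcases hp₁'.lt_or_eq with h₁ | h₁
        · rcases hp₂'.lt_or_eq with h₂ | h₂
          · exact .inl ⟨⟨hp₁, h₁⟩, hp₂, h₂⟩
          · exact .inr (.inr h₂)
        · exact .inr (.inl h₁)
    _ ≤ μ (Ioo a b ×ˢ Ioo c d) + μ (Prod.fst ⁻¹' {b} ∪ Prod.snd ⁻¹' {d}) :=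
        measure_union_le _ _
    _ = μ (Ioo a b ×ˢ Ioo c d) := by
        rw [measure_union_null (hline measurable_fst h.map_fst b)
          (hline measurable_snd h.map_snd d), add_zero]

lemma exists_integral_lt (h : IsDoublyStochastic μ)
    {G : ℝ × ℝ → ℝ} {M : ℝ} (hG : Measurable G) (hGM : ∀ p, ‖G p‖ ≤ M)
    {Q₁ Q₂ : Set (ℝ × ℝ)} (hQ₁ : MeasurableSet Q₁) (hQ₂ : MeasurableSet Q₂)
    (hdisj : Disjoint Q₁ Q₂) (hμQ₁ : μ Q₁ ≠ 0) (hμQ₂ : μ Q₂ ≠ 0)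
    (hgain : ∀ p ∈ Q₁, ∀ q ∈ Q₂, G p + G q < G (p.1, q.2) + G (q.1, p.2)) :
    ∃ ν, IsDoublyStochastic ν ∧ ∫ p, G p ∂μ < ∫ p, G p ∂ν := by
  have := h.1
  obtain ⟨ν, hfst, hsnd, hlt⟩ :=
    exists_map_eq_integral_lt μ hG hGM hQ₁ hQ₂ hdisj hμQ₁ hμQ₂ hgain
  exact ⟨ν, isDoublyStochastic_of_map (hfst.trans h.map_fst) (hsnd.trans h.map_snd), hlt⟩

end IsDoublyStochastic

open scoped BoundedContinuousFunction in
lemma exists_boundedContinuousFunction_eqOn_unitSquare {F : ℝ × ℝ → ℝ}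
    (hF : ContinuousOn F (𝕀 ×ˢ 𝕀)) : ∃ G : ℝ × ℝ →ᵇ ℝ, EqOn G F (𝕀 ×ˢ 𝕀) := by
  set π : ℝ × ℝ → ℝ × ℝ := fun p => (projIcc 0 1 zero_le_one p.1, projIcc 0 1 zero_le_one p.2)
  have hπ : ∀ p, π p ∈ 𝕀 ×ˢ 𝕀 := fun p => ⟨Subtype.prop _, Subtype.prop _⟩
  obtain ⟨M, hM⟩ := (isCompact_Icc.prod isCompact_Icc).exists_bound_of_continuousOn hF
  refine ⟨.ofNormedAddCommGroup (F ∘ π) (hF.comp_continuous (by fun_prop) hπ) M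
    fun p => hM _ (hπ p), fun p ⟨hp₁, hp₂⟩ => ?_⟩
  simp [π, projIcc_of_mem _ hp₁, projIcc_of_mem _ hp₂]

def MixedDerivPosOn (F : ℝ × ℝ → ℝ) (s t : Set ℝ) : Prop :=
  ∀ x y, x ∈ s → y ∈ t →
    DifferentiableAt ℝ (fun x' => F (x', y)) x ∧
    DifferentiableAt ℝ (fun y' => deriv (fun x' => F (x', y')) x) y ∧
    0 < deriv (fun y' => deriv (fun x' => F (x', y')) x) y

lemma MixedDerivPosOn.add_lt_add {F : ℝ × ℝ → ℝ} {s t : Set ℝ} (hF : MixedDerivPosOn F s t)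
    (hs : s.OrdConnected) (ht : t.OrdConnected) {x₁ x₂ y₁ y₂ : ℝ} (hx₁ : x₁ ∈ s) (hx₂ : x₂ ∈ s)
    (hy₁ : y₁ ∈ t) (hy₂ : y₂ ∈ t) (hx : x₁ < x₂) (hy : y₁ < y₂) :
    F (x₁, y₂) + F (x₂, y₁) < F (x₁, y₁) + F (x₂, y₂) := by
  have hIx : Icc x₁ x₂ ⊆ s := hs.out hx₁ hx₂
  have hIy : Icc y₁ y₂ ⊆ t := ht.out hy₁ hy₂
  have hdiff : ∀ u ∈ s, ∀ v ∈ Icc y₁ y₂, DifferentiableAt ℝ (fun x' => F (x', v)) u :=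
    fun u hu v hv => (hF u v hu (hIy hv)).1
  have hderiv_lt : ∀ u ∈ s,
      deriv (fun x' => F (x', y₁)) u < deriv (fun x' => F (x', y₂)) u := fun u hu =>
    strictMonoOn_of_deriv_pos (convex_Icc y₁ y₂)
      (fun v hv => (hF u v hu (hIy hv)).2.1.continuousAt.continuousWithinAt)
      (fun v hv => (hF u v hu (hIy (interior_subset hv))).2.2)
      (left_mem_Icc.2 hy.le) (right_mem_Icc.2 hy.le) hy
  have hmono : StrictMonoOn (fun x' => F (x', y₂) - F (x', y₁)) (Icc x₁ x₂) :=
    strictMonoOn_of_deriv_pos (convex_Icc x₁ x₂)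
      (fun u hu => ((hdiff u (hIx hu) y₂ (right_mem_Icc.2 hy.le)).sub
        (hdiff u (hIx hu) y₁ (left_mem_Icc.2 hy.le))).continuousAt.continuousWithinAt)
      (fun u hu => by
        have hu' := hIx (interior_subset hu)
        rw [deriv_fun_sub (hdiff u hu' y₂ (right_mem_Icc.2 hy.le))
          (hdiff u hu' y₁ (left_mem_Icc.2 hy.le)), sub_pos]
        exact hderiv_lt u hu')
  have := hmono (left_mem_Icc.2 hx.le) (right_mem_Icc.2 hx.le) hx
  simp only at this
  linarith

lemma IsDoublyStochastic.measure_Ioo_prod_Ioo_eq_zero_or {F : ℝ × ℝ → ℝ}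
    (hF : ContinuousOn F (𝕀 ×ˢ 𝕀)) {μ : Measure (ℝ × ℝ)} (hμ : IsDoublyStochastic μ)
    (hmax : ∀ ν, IsDoublyStochastic ν → ∫ p, F p ∂ν ≤ ∫ p, F p ∂μ)
    {X₁ X₂ Y₁ Y₂ : ℝ} (hFXY : MixedDerivPosOn F (Ioo X₁ X₂) (Ioo Y₁ Y₂))
    {x y : ℝ} (hx : x ∈ Icc X₁ X₂) (hy : y ∈ Icc Y₁ Y₂) :
    μ (Ioo X₁ x ×ˢ Ioo y Y₂) = 0 ∨ μ (Ioo x X₂ ×ˢ Ioo Y₁ y) = 0 := by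
  by_contra! ⟨h₁, h₂⟩
  obtain ⟨G, hGF⟩ := exists_boundedContinuousFunction_eqOn_unitSquare hF
  have hFG : ∀ ν, IsDoublyStochastic ν → ∫ p, F p ∂ν = ∫ p, G p ∂ν := fun ν hν =>
    integral_congr_ae <| Filter.Eventually.mono (mem_ae_iff.2 hν.measure_compl_unitSquare)
      fun p hp => (hGF hp).symm
  have hK : MeasurableSet (𝕀 ×ˢ 𝕀) := measurableSet_Icc.prod measurableSet_Icc
  obtain ⟨ν, hν, hlt⟩ := hμ.exists_integral_lt G.continuous.measurable G.norm_coe_le_norm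
    (Q₁ := Ioo X₁ x ×ˢ Ioo y Y₂ ∩ 𝕀 ×ˢ 𝕀) (Q₂ := Ioo x X₂ ×ˢ Ioo Y₁ y ∩ 𝕀 ×ˢ 𝕀)
    ((measurableSet_Ioo.prod measurableSet_Ioo).inter hK)
    ((measurableSet_Ioo.prod measurableSet_Ioo).inter hK)
    (disjoint_left.2 fun p hp hq => lt_asymm hp.1.1.2 hq.1.1.1)
    -- intersecting with the square, where `G = F`, costs no mass
    (by rwa [measure_inter_conull hμ.measure_compl_unitSquare])
    (by rwa [measure_inter_conull hμ.measure_compl_unitSquare])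
    (fun p ⟨⟨hp₁, hp₂⟩, hpK⟩ q ⟨⟨hq₁, hq₂⟩, hqK⟩ => by
      rw [hGF hpK, hGF hqK, @hGF (p.1, q.2) ⟨hpK.1, hqK.2⟩,
        @hGF (q.1, p.2) ⟨hqK.1, hpK.2⟩]
      exact hFXY.add_lt_add ordConnected_Ioo ordConnected_Ioo ⟨hp₁.1, hp₁.2.trans_le hx.2⟩
        ⟨hx.1.trans_lt hq₁.1, hq₁.2⟩ ⟨hq₂.1, hq₂.2.trans_le hy.2⟩
        ⟨hy.1.trans_lt hp₂.1, hp₂.2⟩ (hp₁.2.trans hq₁.1) (hq₂.2.trans hp₂.1))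
  rw [← hFG μ hμ, ← hFG ν hν] at hlt
  exact (hmax ν hν).not_gt hlt

theorem stmt0_general (F : ℝ × ℝ → ℝ)
    (hFcont : ContinuousOn F (Icc (0:ℝ) 1 ×ˢ Icc (0:ℝ) 1))
    (μstar : Measure (ℝ × ℝ)) (hds : IsDoublyStochastic μstar)
    (hmax : ∀ μ : Measure (ℝ × ℝ), IsDoublyStochastic μ →
      ∫ p, F p ∂μ ≤ ∫ p, F p ∂μstar)
    (C : ℝ → ℝ → ℝ) (hC : ∀ x y, C x y = copulaOf μstar x y)
    (X₁ X₂ Y₁ Y₂ : ℝ)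
    (hD2 : ∀ x y, x ∈ Ioo X₁ X₂ → y ∈ Ioo Y₁ Y₂ →
      DifferentiableAt ℝ (fun x' => F (x', y)) x ∧
      DifferentiableAt ℝ (fun y' => deriv (fun x' => F (x', y')) x) y ∧
      0 < deriv (fun y' => deriv (fun x' => F (x', y')) x) y) :
    ∀ x ∈ Icc X₁ X₂, ∀ y ∈ Icc Y₁ Y₂,
      C x y = min (C x Y₂ + C X₁ y - C X₁ Y₂) (C x Y₁ + C X₂ y - C X₂ Y₁) := by
  intro x hx y hy
  have := hds.1
  simp only [hC, hds.copulaOf_eq]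
  have hNW := measureReal_Ioc_prod_Ioc μstar hx.1 hy.2
  have hSE := measureReal_Ioc_prod_Ioc μstar hx.2 hy.1
  have hNW_nonneg : 0 ≤ μstar.real (Ioc X₁ x ×ˢ Ioc y Y₂) := measureReal_nonneg
  have hSE_nonneg : 0 ≤ μstar.real (Ioc x X₂ ×ˢ Ioc Y₁ y) := measureReal_nonneg
  rcases hds.measure_Ioo_prod_Ioo_eq_zero_or hFcont hmax hD2 hx hy with h | h <;>
    rw [hds.measure_Ioo_prod_Ioo, ← measureReal_eq_zero_iff] at h
  · rw [min_eq_left (by linarith)]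
    linarith
  · rw [min_eq_right (by linarith)]
    linarith

theorem stmt0 (F : ℝ × ℝ → ℝ)
    (hFcont : ContinuousOn F (Icc (0:ℝ) 1 ×ˢ Icc (0:ℝ) 1))
    (μstar : Measure (ℝ × ℝ)) (hds : IsDoublyStochastic μstar)
    (hmax : ∀ μ : Measure (ℝ × ℝ), IsDoublyStochastic μ →
      ∫ p, F p ∂μ ≤ ∫ p, F p ∂μstar)
    (C : ℝ → ℝ → ℝ) (hC : ∀ x y, C x y = copulaOf μstar x y)
    (X₁ X₂ Y₁ Y₂ : ℝ)
    (hX₁ : 0 ≤ X₁) (hX : X₁ ≤ X₂) (hX₂ : X₂ ≤ 1)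
    (hY₁ : 0 ≤ Y₁) (hY : Y₁ ≤ Y₂) (hY₂ : Y₂ ≤ 1)
    (hrect : C X₂ Y₂ + C X₁ Y₁ - C X₁ Y₂ - C X₂ Y₁ > 0)
    (hD2 : ∀ x y, x ∈ Ioo X₁ X₂ → y ∈ Ioo Y₁ Y₂ →
      DifferentiableAt ℝ (fun x' => F (x', y)) x ∧
      DifferentiableAt ℝ (fun y' => deriv (fun x' => F (x', y')) x) y ∧
      0 < deriv (fun y' => deriv (fun x' => F (x', y')) x) y) :
    ∀ x ∈ Icc X₁ X₂, ∀ y ∈ Icc Y₁ Y₂,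
      C x y = min (C x Y₂ + C X₁ y - C X₁ Y₂) (C x Y₁ + C X₂ y - C X₂ Y₁) :=
  stmt0_general F hFcont μstar hds hmax C hC X₁ X₂ Y₁ Y₂ hD2
end

section
/- Let 0 < x₁ < x₂ < 1 and let h₁, h₂ : [0,1] → ℝ satisfy: h₁(0) = h₂(0) = 0, h₁(1) = x₁, h₂(1) = x₂, and for all 0 ≤ y ≤ y' ≤ 1 the increment inequalities 0 ≤ h₁(y') − h₁(y) ≤ h₂(y') − h₂(y) ≤ y' − y hold. Define C : [0,1]² → ℝ by C(x,y) = min(x, h₁(y)) for x ∈ [0,x₁], C(x,y) = max(x + h₂(y) − x₂, h₁(y)) for x ∈ [x₁,x₂], and C(x,y) = min(x − x₂ + h₂(y), y) for x ∈ [x₂,1]. Then C is a copula: C(x,0) = C(0,y) = 0, C(x,1) = x, C(1,y) = y for all x,y ∈ [0,1], and C(x₂',y₂') − C(x₂',y₁') − C(x₁',y₂') + C(x₁',y₁') ≥ 0 for all x₁' ≤ x₂' and y₁' ≤ y₂' in [0,1]. -/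
open Set

theorem stmt3 (x₁ x₂ : ℝ) (hx₁ : 0 < x₁) (hx₁₂ : x₁ < x₂) (hx₂ : x₂ < 1)
    (h₁ h₂ : ℝ → ℝ)
    (hh₁0 : h₁ 0 = 0) (hh₂0 : h₂ 0 = 0) (hh₁1 : h₁ 1 = x₁) (hh₂1 : h₂ 1 = x₂)
    (hincr : ∀ y y' : ℝ, 0 ≤ y → y ≤ y' → y' ≤ 1 →
      0 ≤ h₁ y' - h₁ y ∧ h₁ y' - h₁ y ≤ h₂ y' - h₂ y ∧ h₂ y' - h₂ y ≤ y' - y)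
    (C : ℝ → ℝ → ℝ)
    (hC1 : ∀ x ∈ Icc 0 x₁, ∀ y ∈ Icc (0:ℝ) 1, C x y = min x (h₁ y))
    (hC2 : ∀ x ∈ Icc x₁ x₂, ∀ y ∈ Icc (0:ℝ) 1, C x y = max (x + h₂ y - x₂) (h₁ y))
    (hC3 : ∀ x ∈ Icc x₂ 1, ∀ y ∈ Icc (0:ℝ) 1, C x y = min (x - x₂ + h₂ y) y) :
    (∀ x ∈ Icc (0:ℝ) 1, C x 0 = 0 ∧ C x 1 = x) ∧
    (∀ y ∈ Icc (0:ℝ) 1, C 0 y = 0 ∧ C 1 y = y) ∧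
    (∀ x₁' x₂' y₁' y₂' : ℝ, 0 ≤ x₁' → x₁' ≤ x₂' → x₂' ≤ 1 →
      0 ≤ y₁' → y₁' ≤ y₂' → y₂' ≤ 1 →
      0 ≤ C x₂' y₂' - C x₂' y₁' - C x₁' y₂' + C x₁' y₁') := by
  have hfact : ∀ y ∈ Icc (0:ℝ) 1, 0 ≤ h₁ y ∧ h₁ y ≤ h₂ y ∧ h₂ y ≤ y ∧
      h₁ y ≤ x₁ ∧ x₁ - h₁ y ≤ x₂ - h₂ y ∧ x₂ - h₂ y ≤ 1 - y := by
    intro y hy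
    obtain ⟨a1, a2, a3⟩ := hincr 0 y le_rfl hy.1 hy.2
    obtain ⟨b1, b2, b3⟩ := hincr y 1 hy.1 hy.2 le_rfl
    rw [hh₁0] at a1 a2
    rw [hh₂0] at a2 a3
    rw [hh₁1] at b1 b2
    rw [hh₂1] at b2 b3
    exact ⟨by linarith, by linarith, by linarith, by linarith, by linarith, by linarith⟩
  have h0m : (0:ℝ) ∈ Icc (0:ℝ) 1 := ⟨le_rfl, by norm_num⟩
  have h1m : (1:ℝ) ∈ Icc (0:ℝ) 1 := ⟨by norm_num, le_rfl⟩
  refine ⟨?_, ?_, ?_⟩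
  · intro x hx
    rcases le_total x x₁ with h | h
    · rw [hC1 x ⟨hx.1, h⟩ 0 h0m, hC1 x ⟨hx.1, h⟩ 1 h1m, hh₁0, hh₁1]
      refine ⟨?_, ?_⟩ <;> simp only [min_def] <;> split_ifs <;> linarith [hx.1]
    · rcases le_total x x₂ with h' | h'
      · rw [hC2 x ⟨h, h'⟩ 0 h0m, hC2 x ⟨h, h'⟩ 1 h1m, hh₁0, hh₁1, hh₂0, hh₂1]
        refine ⟨?_, ?_⟩ <;> simp only [max_def] <;> split_ifs <;> linarith
      · rw [hC3 x ⟨h', hx.2⟩ 0 h0m, hC3 x ⟨h', hx.2⟩ 1 h1m, hh₂0, hh₂1]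
        refine ⟨?_, ?_⟩ <;> simp only [min_def] <;> split_ifs <;> linarith [hx.2]
  · intro y hy
    obtain ⟨f1, f2, f3, f4, f5, f6⟩ := hfact y hy
    rw [hC1 0 ⟨le_rfl, hx₁.le⟩ y hy, hC3 1 ⟨hx₂.le, le_rfl⟩ y hy]
    refine ⟨?_, ?_⟩ <;> simp only [min_def] <;> split_ifs <;> linarith
  · intro u v p q hu huv hv hp hpq hq
    have hyp : p ∈ Icc (0:ℝ) 1 := ⟨hp, hpq.trans hq⟩
    have hyq : q ∈ Icc (0:ℝ) 1 := ⟨hp.trans hpq, hq⟩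
    obtain ⟨f1, f2, f3, f4, f5, f6⟩ := hfact p hyp
    obtain ⟨g1, g2, g3, g4, g5, g6⟩ := hfact q hyq
    obtain ⟨i1, i2, i3⟩ := hincr p q hp hpq hq
    have L1 : ∀ a b : ℝ, 0 ≤ a → a ≤ b → b ≤ x₁ →
        C a q - C a p ≤ C b q - C b p := by
      intro a b ha hab hb
      rw [hC1 a ⟨ha, hab.trans hb⟩ p hyp, hC1 a ⟨ha, hab.trans hb⟩ q hyq,
          hC1 b ⟨ha.trans hab, hb⟩ p hyp, hC1 b ⟨ha.trans hab, hb⟩ q hyq]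
      simp only [min_def] <;> split_ifs <;> linarith
    have L2 : ∀ a b : ℝ, x₁ ≤ a → a ≤ b → b ≤ x₂ →
        C a q - C a p ≤ C b q - C b p := by
      intro a b ha hab hb
      rw [hC2 a ⟨ha, hab.trans hb⟩ p hyp, hC2 a ⟨ha, hab.trans hb⟩ q hyq,
          hC2 b ⟨ha.trans hab, hb⟩ p hyp, hC2 b ⟨ha.trans hab, hb⟩ q hyq]
      simp only [max_def] <;> split_ifs <;> linarith
    have L3 : ∀ a b : ℝ, x₂ ≤ a → a ≤ b → b ≤ 1 →
        C a q - C a p ≤ C b q - C b p := by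
      intro a b ha hab hb
      rw [hC3 a ⟨ha, hab.trans hb⟩ p hyp, hC3 a ⟨ha, hab.trans hb⟩ q hyq,
          hC3 b ⟨ha.trans hab, hb⟩ p hyp, hC3 b ⟨ha.trans hab, hb⟩ q hyq]
      simp only [min_def] <;> split_ifs <;> linarith
    rcases le_total v x₁ with h | h
    · have := L1 u v hu huv h; linarith
    · rcases le_total v x₂ with h' | h'
      · rcases le_total u x₁ with h'' | h''
        · have t1 := L1 u x₁ hu h'' le_rfl
          have t2 := L2 x₁ v le_rfl h h'
          linarith
        · have := L2 u v h'' huv h'; linarith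
      · rcases le_total u x₁ with h'' | h''
        · have t1 := L1 u x₁ hu h'' le_rfl
          have t2 := L2 x₁ x₂ le_rfl hx₁₂.le le_rfl
          have t3 := L3 x₂ v le_rfl h' hv
          linarith
        · rcases le_total u x₂ with h''' | h'''
          · have t1 := L2 u x₂ h'' h''' le_rfl
            have t2 := L3 x₂ v le_rfl h' hv
            linarith
          · have := L3 u v h''' huv hv; linarith
end

section
/- Let 0 < x₁ < x₂ < 1 and let h₁, h₂ : [0,1] → ℝ, and define C : [0,1]² → ℝ by C(x,y) = min(x, h₁(y)) for x ∈ [0,x₁], C(x,y) = max(x + h₂(y) − x₂, h₁(y)) for x ∈ [x₁,x₂], and C(x,y) = min(x − x₂ + h₂(y), y) for x ∈ [x₂,1]. If C is a copula, then: h₁(0) = h₂(0) = 0; h₁(1) = x₁; h₂(1) = x₂; 0 ≤ h₁(y) ≤ h₂(y) ≤ y for all y ∈ [0,1]; and for all 0 ≤ y ≤ y' ≤ 1, 0 ≤ h₁(y') − h₁(y) ≤ h₂(y') − h₂(y) ≤ y' − y. -/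
open Set

theorem stmt4 (x₁ x₂ : ℝ) (hx₁ : 0 < x₁) (hx₁₂ : x₁ < x₂) (hx₂ : x₂ < 1)
    (h₁ h₂ : ℝ → ℝ)
    (C : ℝ → ℝ → ℝ)
    (hC1 : ∀ x ∈ Icc 0 x₁, ∀ y ∈ Icc (0:ℝ) 1, C x y = min x (h₁ y))
    (hC2 : ∀ x ∈ Icc x₁ x₂, ∀ y ∈ Icc (0:ℝ) 1, C x y = max (x + h₂ y - x₂) (h₁ y))
    (hC3 : ∀ x ∈ Icc x₂ 1, ∀ y ∈ Icc (0:ℝ) 1, C x y = min (x - x₂ + h₂ y) y)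
    -- `C` is a copula:
    (hbd : ∀ x ∈ Icc (0:ℝ) 1, ∀ y ∈ Icc (0:ℝ) 1, C x y ∈ Icc (0:ℝ) 1)
    (hC0x : ∀ x ∈ Icc (0:ℝ) 1, C x 0 = 0) (hC0y : ∀ y ∈ Icc (0:ℝ) 1, C 0 y = 0)
    (hC1x : ∀ x ∈ Icc (0:ℝ) 1, C x 1 = x) (hC1y : ∀ y ∈ Icc (0:ℝ) 1, C 1 y = y)
    (h2incr : ∀ a b c d : ℝ, 0 ≤ a → a ≤ b → b ≤ 1 → 0 ≤ c → c ≤ d → d ≤ 1 →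
      0 ≤ C b d - C b c - C a d + C a c) :
    h₁ 0 = 0 ∧ h₂ 0 = 0 ∧ h₁ 1 = x₁ ∧ h₂ 1 = x₂ ∧
    (∀ y ∈ Icc (0:ℝ) 1, 0 ≤ h₁ y ∧ h₁ y ≤ h₂ y ∧ h₂ y ≤ y) ∧
    (∀ y y' : ℝ, 0 ≤ y → y ≤ y' → y' ≤ 1 →
      0 ≤ h₁ y' - h₁ y ∧ h₁ y' - h₁ y ≤ h₂ y' - h₂ y ∧ h₂ y' - h₂ y ≤ y' - y) := by
  have hx₁m : x₁ ∈ Icc (0:ℝ) 1 := ⟨hx₁.le, le_of_lt (hx₁₂.trans hx₂)⟩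
  have hx₂m : x₂ ∈ Icc (0:ℝ) 1 := ⟨(hx₁.trans hx₁₂).le, hx₂.le⟩
  -- C x₁ y = h₁ y  and  h₁ y ≤ x₁
  have key₁ : ∀ y ∈ Icc (0:ℝ) 1, C x₁ y = h₁ y ∧ h₁ y ≤ x₁ := by
    intro y hy
    have e1 : C x₁ y = min x₁ (h₁ y) := hC1 x₁ ⟨hx₁.le, le_refl _⟩ y hy
    have e2 : C x₁ y = max (x₁ + h₂ y - x₂) (h₁ y) := hC2 x₁ ⟨le_refl _, hx₁₂.le⟩ y hy
    have h3 : h₁ y ≤ min x₁ (h₁ y) := by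
      rw [← e1, e2]; exact le_max_right _ _
    have h4 : h₁ y ≤ x₁ := le_trans h3 (min_le_left _ _)
    refine ⟨?_, h4⟩
    rw [e1, min_eq_right h4]
  -- C x₂ y = h₂ y, h₁ y ≤ h₂ y, h₂ y ≤ y
  have key₂ : ∀ y ∈ Icc (0:ℝ) 1, C x₂ y = h₂ y ∧ h₁ y ≤ h₂ y ∧ h₂ y ≤ y := by
    intro y hy
    have e2 : C x₂ y = max (h₂ y) (h₁ y) := by
      have := hC2 x₂ ⟨hx₁₂.le, le_refl _⟩ y hy
      rwa [show x₂ + h₂ y - x₂ = h₂ y by ring] at this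
    have e3 : C x₂ y = min (h₂ y) y := by
      have := hC3 x₂ ⟨le_refl _, hx₂.le⟩ y hy
      rwa [show x₂ - x₂ + h₂ y = h₂ y by ring] at this
    -- C x₂ y ≤ y
    have hmono := h2incr x₂ 1 0 y hx₂m.1 hx₂.le le_rfl le_rfl hy.1 hy.2
    rw [hC0x x₂ hx₂m, hC0x 1 ⟨zero_le_one, le_refl _⟩, hC1y y hy] at hmono
    have hle : C x₂ y ≤ y := by linarith
    have h₂le : h₂ y ≤ y := le_trans (le_trans (le_max_left _ _) e2.ge) hle
    have eC : C x₂ y = h₂ y := by rw [e3, min_eq_left h₂le]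
    refine ⟨eC, ?_, h₂le⟩
    have : max (h₂ y) (h₁ y) = h₂ y := by rw [← e2, eC]
    have := le_max_right (h₂ y) (h₁ y)
    rw [‹max (h₂ y) (h₁ y) = h₂ y›] at this
    exact this
  have h0m : (0:ℝ) ∈ Icc (0:ℝ) 1 := ⟨le_refl _, zero_le_one⟩
  have h1m : (1:ℝ) ∈ Icc (0:ℝ) 1 := ⟨zero_le_one, le_refl _⟩
  have h₁0 : h₁ 0 = 0 := by rw [← (key₁ 0 h0m).1, hC0x x₁ hx₁m]
  have h₂0 : h₂ 0 = 0 := by rw [← (key₂ 0 h0m).1, hC0x x₂ hx₂m]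
  have h₁1 : h₁ 1 = x₁ := by rw [← (key₁ 1 h1m).1, hC1x x₁ hx₁m]
  have h₂1 : h₂ 1 = x₂ := by rw [← (key₂ 1 h1m).1, hC1x x₂ hx₂m]
  refine ⟨h₁0, h₂0, h₁1, h₂1, ?_, ?_⟩
  · intro y hy
    have hb := hbd x₁ hx₁m y hy
    rw [(key₁ y hy).1] at hb
    exact ⟨hb.1, (key₂ y hy).2.1, (key₂ y hy).2.2⟩
  · intro y y' hy0 hyy' hy'1
    have hym : y ∈ Icc (0:ℝ) 1 := ⟨hy0, hyy'.trans hy'1⟩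
    have hy'm : y' ∈ Icc (0:ℝ) 1 := ⟨hy0.trans hyy', hy'1⟩
    have A := h2incr 0 x₁ y y' le_rfl hx₁.le hx₁m.2 hy0 hyy' hy'1
    rw [hC0y y hym, hC0y y' hy'm, (key₁ y hym).1, (key₁ y' hy'm).1] at A
    have B := h2incr x₁ x₂ y y' hx₁.le hx₁₂.le hx₂.le hy0 hyy' hy'1
    rw [(key₁ y hym).1, (key₁ y' hy'm).1, (key₂ y hym).1, (key₂ y' hy'm).1] at B
    have D := h2incr x₂ 1 y y' hx₂m.1 hx₂.le le_rfl hy0 hyy' hy'1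
    rw [(key₂ y hym).1, (key₂ y' hy'm).1, hC1y y hym, hC1y y' hy'm] at D
    exact ⟨by linarith, by linarith, by linarith⟩
end

section
/- Let 0 < x₁ < x₂ < 1 and let h₁, h₂ : [0,1] → ℝ be continuously differentiable with h₁(0) = h₂(0) = 0, h₁(1) = x₁, h₂(1) = x₂, and 0 ≤ h₁'(y) ≤ h₂'(y) ≤ 1 for all y ∈ [0,1]. Let λ denote Lebesgue measure restricted to [0,1] and define the measure γ on [0,1]² as the sum of the pushforwards: of λ with density h₁' under y ↦ (h₁(y), y), plus of λ with density (h₂' − h₁') under y ↦ (x₂ − h₂(y) + h₁(y), y), plus of λ with density (1 − h₂') under y ↦ (x₂ − h₂(y) + y, y). Then γ is a doubly stochastic measure on [0,1]², and for all (x,y) ∈ [0,1]², γ([0,x]×[0,y]) equals min(x, h₁(y)) if x ∈ [0,x₁], max(x + h₂(y) − x₂, h₁(y)) if x ∈ [x₁,x₂], and min(x − x₂ + h₂(y), y) if x ∈ [x₂,1]. -/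
open MeasureTheory Set

/-
Each piece of `γ` is the image of a measure `g'(y) dy` on `[0,1]` under a graph map
`y ↦ (c ± g y, y)`, where `g` is one of the non-decreasing `C¹` functions `h₁`, `h₂ - h₁`,
`y - h₂`, whose derivatives add up to `1`. For such `g` the image of `g'(y) dy` on `[0,y]` under
`g` is Lebesgue measure on `[g 0, g y]`, injective or not: on a half-line `Iic c` both sides are
computed through the preimage, which is an initial segment `[0, v]` of `[0, y]`. Hence
`γ(A × [0,y])` is the Lebesgue measure of `A` restricted to the three intervals `[0, h₁ y]`,
`[x₂ - h₂ y + h₁ y, x₂]` and `[x₂, x₂ - h₂ y + y]`. For `y = 1` these are `[0,x₁]`, `[x₁,x₂]` and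
`[x₂,1]`, which gives the first marginal, and `A = [0,x]` gives the rectangle values. The second
marginal is the sum of the three densities, which is `1`.
-/

theorem map_const_sub_volume_restrict_Icc (a b c : ℝ) :
    (volume.restrict (Icc a b)).map (c - ·) = volume.restrict (Icc (c - b) (c - a)) := by
  conv_rhs => rw [← (Measure.measurePreserving_sub_left volume c).map_eq,
    (measurableEmbedding_subLeft c).restrict_map, preimage_const_sub_Icc,
    sub_sub_cancel, sub_sub_cancel]

theorem map_const_add_volume_restrict_Icc (a b c : ℝ) :
    (volume.restrict (Icc a b)).map (c + ·) = volume.restrict (Icc (c + a) (c + b)) := by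
  conv_rhs => rw [← (measurePreserving_add_left volume c).map_eq,
    (measurableEmbedding_addLeft c).restrict_map, preimage_const_add_Icc,
    add_sub_cancel_left, add_sub_cancel_left]

theorem volume_restrict_Icc_add_Icc {a b c : ℝ} (hab : a ≤ b) (hbc : b ≤ c) :
    volume.restrict (Icc a b) + volume.restrict (Icc b c) = volume.restrict (Icc a c) := by
  rw [← Measure.restrict_union_add_inter _ measurableSet_Icc, Icc_union_Icc_eq_Icc hab hbc,
    Icc_inter_Icc_eq_singleton hab hbc, Measure.restrict_eq_zero.2 Real.volume_singleton, add_zero]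

theorem MonotoneOn.exists_preimage_Iic_inter_Icc_eq_Icc {g : ℝ → ℝ} {a b c : ℝ}
    (hg : MonotoneOn g (Icc a b)) (hgc : ContinuousOn g (Icc a b)) (hac : g a ≤ c) (hab : a ≤ b) :
    ∃ v ∈ Icc a b, g ⁻¹' Iic c ∩ Icc a b = Icc a v ∧ g v = min c (g b) := by
  set S := g ⁻¹' Iic c ∩ Icc a b
  have haS : a ∈ S := ⟨hac, left_mem_Icc.2 hab⟩
  have hbdd : BddAbove S := ⟨b, fun x hx => hx.2.2⟩
  have hS : IsClosed S := by
    simpa only [S, inter_comm] using hgc.preimage_isClosed_of_isClosed isClosed_Icc isClosed_Iic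
  have hvS : sSup S ∈ S := hS.csSup_mem ⟨a, haS⟩ hbdd
  set v := sSup S
  have hv : v ∈ Icc a b := hvS.2
  refine ⟨v, hv, Subset.antisymm (fun x hx => ⟨hx.2.1, le_csSup hbdd hx⟩) fun x hx => ?_, ?_⟩
  · have hxab : x ∈ Icc a b := ⟨hx.1, hx.2.trans hv.2⟩
    exact ⟨(hg hxab hv hx.2).trans hvS.1, hxab⟩
  rcases le_total (g b) c with hbc | hcb
  · have hbS : b ∈ S := ⟨hbc, right_mem_Icc.2 hab⟩
    rw [min_eq_right hbc, le_antisymm hv.2 (le_csSup hbdd hbS)]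
  · obtain ⟨u, hu, hgu⟩ := intermediate_value_Icc hv.2 (hgc.mono (Icc_subset_Icc hv.1 le_rfl))
      ⟨hvS.1, hcb⟩
    have huS : u ∈ S := ⟨hgu.le, hv.1.trans hu.1, hu.2⟩
    have huv : u = v := le_antisymm (le_csSup hbdd huS) hu.1
    rw [min_eq_left hcb, ← huv, hgu]

structure HasNonnegContinuousDerivOn (g g' : ℝ → ℝ) (s : Set ℝ) : Prop where
  hasDerivWithinAt : ∀ x ∈ s, HasDerivWithinAt g (g' x) s x
  continuousOn_deriv : ContinuousOn g' s
  deriv_nonneg : ∀ x ∈ s, 0 ≤ g' x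

namespace HasNonnegContinuousDerivOn

variable {g g' : ℝ → ℝ} {s t : Set ℝ} {a b : ℝ}

theorem continuousOn (h : HasNonnegContinuousDerivOn g g' s) : ContinuousOn g s :=
  fun x hx => (h.hasDerivWithinAt x hx).continuousWithinAt

theorem mono (h : HasNonnegContinuousDerivOn g g' s) (hts : t ⊆ s) :
    HasNonnegContinuousDerivOn g g' t where
  hasDerivWithinAt x hx := (h.hasDerivWithinAt x (hts hx)).mono hts
  continuousOn_deriv := h.continuousOn_deriv.mono hts
  deriv_nonneg x hx := h.deriv_nonneg x (hts hx)

theorem monotoneOn (h : HasNonnegContinuousDerivOn g g' (Icc a b)) : MonotoneOn g (Icc a b) :=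
  monotoneOn_of_hasDerivWithinAt_nonneg (convex_Icc a b) h.continuousOn
    (fun x hx => (h.hasDerivWithinAt x (interior_subset hx)).mono interior_subset)
    (fun x hx => h.deriv_nonneg x (interior_subset hx))

theorem mapsTo_Icc (h : HasNonnegContinuousDerivOn g g' (Icc a b)) :
    MapsTo g (Icc a b) (Icc (g a) (g b)) := fun _ hx =>
  ⟨h.monotoneOn (left_mem_Icc.2 (hx.1.trans hx.2)) hx hx.1,
    h.monotoneOn hx (right_mem_Icc.2 (hx.1.trans hx.2)) hx.2⟩

theorem integral_eq_sub (h : HasNonnegContinuousDerivOn g g' (Icc a b)) (hab : a ≤ b) :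
    ∫ x in Icc a b, g' x = g b - g a := by
  rw [integral_Icc_eq_integral_Ioc, ← intervalIntegral.integral_of_le hab]
  exact intervalIntegral.integral_eq_sub_of_hasDerivAt_of_le hab h.continuousOn
    (fun x hx => (h.hasDerivWithinAt x (Ioo_subset_Icc_self hx)).hasDerivAt
      (Icc_mem_nhds hx.1 hx.2))
    (h.continuousOn_deriv.intervalIntegrable_of_Icc hab)

theorem lintegral_eq_sub (h : HasNonnegContinuousDerivOn g g' (Icc a b)) (hab : a ≤ b) :
    ∫⁻ x in Icc a b, ENNReal.ofReal (g' x) = ENNReal.ofReal (g b - g a) := by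
  rw [← h.integral_eq_sub hab, ofReal_integral_eq_lintegral_ofReal
    h.continuousOn_deriv.integrableOn_Icc
    ((ae_restrict_iff' measurableSet_Icc).2 (.of_forall h.deriv_nonneg))]

theorem map_withDensity (h : HasNonnegContinuousDerivOn g g' (Icc a b)) (hab : a ≤ b) :
    ((volume.restrict (Icc a b)).withDensity fun x => ENNReal.ofReal (g' x)).map g =
      volume.restrict (Icc (g a) (g b)) := by
  have : IsFiniteMeasure (volume.restrict (Icc (g a) (g b))) := by
    rw [isFiniteMeasure_restrict]; exact measure_Icc_lt_top.ne
  have hgm : AEMeasurable g ((volume.restrict (Icc a b)).withDensity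
      fun x => ENNReal.ofReal (g' x)) :=
    (h.continuousOn.aemeasurable measurableSet_Icc).mono_ac (withDensity_absolutelyContinuous _ _)
  refine (Measure.ext_of_Iic _ _ fun c => ?_).symm
  rw [Measure.map_apply_of_aemeasurable hgm measurableSet_Iic, withDensity_apply' _,
    Measure.restrict_restrict' measurableSet_Icc, Measure.restrict_apply measurableSet_Iic]
  have hI : Iic c ∩ Icc (g a) (g b) = Icc (g a) (min c (g b)) := by
    ext; simp only [mem_inter_iff, mem_Iic, mem_Icc, le_min_iff]; tauto
  rw [hI]
  rcases lt_or_ge c (g a) with hca | hac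
  · have hS : g ⁻¹' Iic c ∩ Icc a b = ∅ := eq_empty_of_forall_notMem fun x hx =>
      hca.not_ge ((h.monotoneOn (left_mem_Icc.2 hab) hx.2 hx.2.1).trans hx.1)
    rw [hS, Icc_eq_empty (by simp [hca]), Measure.restrict_empty,
      lintegral_zero_measure, measure_empty]
  · obtain ⟨v, hv, hS, hgv⟩ :=
      h.monotoneOn.exists_preimage_Iic_inter_Icc_eq_Icc h.continuousOn hac hab
    rw [hS, (h.mono (Icc_subset_Icc le_rfl hv.2)).lintegral_eq_sub hv.1, Real.volume_Icc, hgv]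

end HasNonnegContinuousDerivOn

theorem withDensity_add_left_of_aemeasurable {α : Type*} [MeasurableSpace α] {μ : Measure α}
    {f : α → ENNReal} (hf : AEMeasurable f μ) (g : α → ENNReal) :
    μ.withDensity (f + g) = μ.withDensity f + μ.withDensity g := by
  rw [withDensity_congr_ae (hf.ae_eq_mk.add (ae_eq_refl g)), withDensity_add_left hf.measurable_mk,
    withDensity_congr_ae hf.ae_eq_mk.symm]

noncomputable def densityOnUnit (w : ℝ → ℝ) : Measure ℝ :=
  (volume.restrict (Icc 0 1)).withDensity fun y => ENNReal.ofReal (w y)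

noncomputable def graphMeasure (T w : ℝ → ℝ) : Measure (ℝ × ℝ) :=
  (densityOnUnit w).map fun y => (T y, y)

section Density

variable {w w₁ w₂ w₃ T g : ℝ → ℝ} {y : ℝ}

theorem aemeasurable_densityOnUnit (hT : ContinuousOn T (Icc 0 1)) :
    AEMeasurable T (densityOnUnit w) :=
  (hT.aemeasurable measurableSet_Icc).mono_ac (withDensity_absolutelyContinuous _ _)

theorem densityOnUnit_restrict_Icc (hy : y ≤ 1) :
    (densityOnUnit w).restrict (Icc 0 y) =
      (volume.restrict (Icc 0 y)).withDensity fun s => ENNReal.ofReal (w s) := by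
  rw [densityOnUnit, restrict_withDensity measurableSet_Icc,
    Measure.restrict_restrict_of_subset (Icc_subset_Icc le_rfl hy)]

theorem map_densityOnUnit_restrict_Icc (hg : HasNonnegContinuousDerivOn g w (Icc 0 1))
    (hy : y ∈ Icc (0:ℝ) 1) :
    ((densityOnUnit w).restrict (Icc 0 y)).map g = volume.restrict (Icc (g 0) (g y)) := by
  rw [densityOnUnit_restrict_Icc hy.2, (hg.mono (Icc_subset_Icc le_rfl hy.2)).map_withDensity hy.1]

theorem densityOnUnit_add_add_eq_volume (hw₁ : ContinuousOn w₁ (Icc 0 1))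
    (hw₂ : ContinuousOn w₂ (Icc 0 1)) (hnn₁ : ∀ s ∈ Icc (0:ℝ) 1, 0 ≤ w₁ s)
    (hnn₂ : ∀ s ∈ Icc (0:ℝ) 1, 0 ≤ w₂ s) (hnn₃ : ∀ s ∈ Icc (0:ℝ) 1, 0 ≤ w₃ s)
    (hsum : ∀ s ∈ Icc (0:ℝ) 1, w₁ s + w₂ s + w₃ s = 1) :
    densityOnUnit w₁ + densityOnUnit w₂ + densityOnUnit w₃ = volume.restrict (Icc 0 1) := by
  have hm₁ := (hw₁.aemeasurable (μ := volume) measurableSet_Icc).ennreal_ofReal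
  have hm₂ := (hw₂.aemeasurable (μ := volume) measurableSet_Icc).ennreal_ofReal
  rw [densityOnUnit, densityOnUnit, densityOnUnit, ← withDensity_add_left_of_aemeasurable hm₁,
    ← withDensity_add_left_of_aemeasurable (hm₁.add hm₂)]
  conv_rhs => rw [← withDensity_one (μ := volume.restrict (Icc (0:ℝ) 1))]
  refine withDensity_congr_ae ?_
  filter_upwards [ae_restrict_mem measurableSet_Icc] with s hs
  simp only [Pi.add_apply, Pi.one_apply]
  rw [← ENNReal.ofReal_add (hnn₁ s hs) (hnn₂ s hs),
    ← ENNReal.ofReal_add (add_nonneg (hnn₁ s hs) (hnn₂ s hs)) (hnn₃ s hs), hsum s hs,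
    ENNReal.ofReal_one]

theorem graphMeasure_apply_prod (hT : ContinuousOn T (Icc 0 1)) {A B : Set ℝ}
    (hA : MeasurableSet A) (hB : MeasurableSet B) :
    graphMeasure T w (A ×ˢ B) = densityOnUnit w (T ⁻¹' A ∩ B) := by
  rw [graphMeasure, Measure.map_apply_of_aemeasurable
    ((aemeasurable_densityOnUnit hT).prodMk aemeasurable_id') (hA.prod hB), mk_preimage_prod,
    preimage_id']

theorem graphMeasure_univ (hT : ContinuousOn T (Icc 0 1)) :
    graphMeasure T w univ = densityOnUnit w univ := by
  rw [← univ_prod_univ, graphMeasure_apply_prod hT .univ .univ, preimage_univ, univ_inter]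

theorem graphMeasure_prod_Icc (hT : ContinuousOn T (Icc 0 1)) {A : Set ℝ} (hA : MeasurableSet A) :
    graphMeasure T w (A ×ˢ Icc 0 y) = ((densityOnUnit w).restrict (Icc 0 y)).map T A := by
  rw [graphMeasure_apply_prod hT hA measurableSet_Icc, Measure.map_apply_of_aemeasurable
    ((aemeasurable_densityOnUnit hT).mono_ac Measure.restrict_le_self.absolutelyContinuous) hA,
    Measure.restrict_apply' measurableSet_Icc]

theorem graphMeasure_Icc_prod (hT : ContinuousOn T (Icc 0 1)) (hTI : MapsTo T (Icc 0 1) (Icc 0 1))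
    {B : Set ℝ} (hB : MeasurableSet B) (hBI : B ⊆ Icc 0 1) :
    graphMeasure T w (Icc 0 1 ×ˢ B) = densityOnUnit w B := by
  rw [graphMeasure_apply_prod hT measurableSet_Icc hB,
    inter_eq_right.2 (hBI.trans hTI.subset_preimage)]

end Density

noncomputable def threePieceMeasure (x₂ : ℝ) (h₁ h₂ h₁' h₂' : ℝ → ℝ) : Measure (ℝ × ℝ) :=
  graphMeasure h₁ h₁' + graphMeasure (fun y => x₂ - h₂ y + h₁ y) (fun y => h₂' y - h₁' y) +
    graphMeasure (fun y => x₂ - h₂ y + y) (fun y => 1 - h₂' y)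

section ThreePiece

variable {x₂ : ℝ} {h₁ h₂ h₁' h₂' : ℝ → ℝ}

theorem threePieceMeasure_prod_Icc (hg₁ : HasNonnegContinuousDerivOn h₁ h₁' (Icc 0 1))
    (hg₂ : HasNonnegContinuousDerivOn (fun s => h₂ s - h₁ s) (fun s => h₂' s - h₁' s) (Icc 0 1))
    (hg₃ : HasNonnegContinuousDerivOn (fun s => s - h₂ s) (fun s => 1 - h₂' s) (Icc 0 1))
    (hh₁0 : h₁ 0 = 0) (hh₂0 : h₂ 0 = 0) {y : ℝ} (hy : y ∈ Icc (0:ℝ) 1) {A : Set ℝ}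
    (hA : MeasurableSet A) :
    threePieceMeasure x₂ h₁ h₂ h₁' h₂' (A ×ˢ Icc 0 y) =
      volume (A ∩ Icc 0 (h₁ y)) + volume (A ∩ Icc (x₂ - h₂ y + h₁ y) x₂) +
        volume (A ∩ Icc x₂ (x₂ - h₂ y + y)) := by
  have e₂ : (fun s => x₂ - h₂ s + h₁ s) = (x₂ - ·) ∘ fun s => h₂ s - h₁ s := by
    funext s; simp only [Function.comp_apply]; ring
  have e₃ : (fun s => x₂ - h₂ s + s) = (x₂ + ·) ∘ fun s => s - h₂ s := by
    funext s; simp only [Function.comp_apply]; ring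
  have hm₂ := (aemeasurable_densityOnUnit (w := fun s => h₂' s - h₁' s) hg₂.continuousOn).restrict
    (s := Icc 0 y)
  have hm₃ := (aemeasurable_densityOnUnit (w := fun s => 1 - h₂' s) hg₃.continuousOn).restrict
    (s := Icc 0 y)
  rw [threePieceMeasure, Measure.add_apply, Measure.add_apply, e₂, e₃,
    graphMeasure_prod_Icc hg₁.continuousOn hA,
    graphMeasure_prod_Icc ((continuous_sub_left x₂).comp_continuousOn hg₂.continuousOn) hA,
    graphMeasure_prod_Icc ((continuous_const_add x₂).comp_continuousOn hg₃.continuousOn) hA,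
    ← (measurable_const_sub x₂).aemeasurable.map_map_of_aemeasurable hm₂,
    ← (measurable_const_add x₂).aemeasurable.map_map_of_aemeasurable hm₃,
    map_densityOnUnit_restrict_Icc hg₁ hy, map_densityOnUnit_restrict_Icc hg₂ hy,
    map_densityOnUnit_restrict_Icc hg₃ hy, map_const_sub_volume_restrict_Icc,
    map_const_add_volume_restrict_Icc, Measure.restrict_apply hA, Measure.restrict_apply hA,
    Measure.restrict_apply hA, hh₁0, hh₂0]
  simp only [sub_self, sub_zero, add_zero, sub_sub_eq_add_sub, ← add_sub_assoc,
    add_sub_right_comm]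

theorem mem_Icc_of_three_pieces (hg₁ : HasNonnegContinuousDerivOn h₁ h₁' (Icc 0 1))
    (hg₂ : HasNonnegContinuousDerivOn (fun s => h₂ s - h₁ s) (fun s => h₂' s - h₁' s) (Icc 0 1))
    (hg₃ : HasNonnegContinuousDerivOn (fun s => s - h₂ s) (fun s => 1 - h₂' s) (Icc 0 1))
    (hh₁0 : h₁ 0 = 0) (hh₂0 : h₂ 0 = 0) (hh₂1 : h₂ 1 = x₂) {s : ℝ} (hs : s ∈ Icc (0:ℝ) 1) :
    h₁ s ∈ Icc 0 (h₁ 1) ∧ h₂ s - h₁ s ∈ Icc 0 (x₂ - h₁ 1) ∧ s - h₂ s ∈ Icc 0 (1 - x₂) := by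
  have b₁ := hg₁.mapsTo_Icc hs
  have b₂ := hg₂.mapsTo_Icc hs
  have b₃ := hg₃.mapsTo_Icc hs
  simp only [hh₁0, hh₂0, hh₂1, sub_self] at b₁ b₂ b₃
  exact ⟨b₁, b₂, b₃⟩

theorem isDoublyStochastic_threePieceMeasure (hg₁ : HasNonnegContinuousDerivOn h₁ h₁' (Icc 0 1))
    (hg₂ : HasNonnegContinuousDerivOn (fun s => h₂ s - h₁ s) (fun s => h₂' s - h₁' s) (Icc 0 1))
    (hg₃ : HasNonnegContinuousDerivOn (fun s => s - h₂ s) (fun s => 1 - h₂' s) (Icc 0 1))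
    (hh₁0 : h₁ 0 = 0) (hh₂0 : h₂ 0 = 0) (hh₂1 : h₂ 1 = x₂) :
    IsDoublyStochastic (threePieceMeasure x₂ h₁ h₂ h₁' h₂') := by
  have hb := fun s (hs : s ∈ Icc (0:ℝ) 1) => mem_Icc_of_three_pieces hg₁ hg₂ hg₃ hh₁0 hh₂0 hh₂1 hs
  have hI : (1:ℝ) ∈ Icc (0:ℝ) 1 := right_mem_Icc.2 zero_le_one
  obtain ⟨⟨hx₁, -⟩, ⟨hx₁₂, -⟩, ⟨hx₂, -⟩⟩ := hb 1 hI
  rw [hh₂1] at hx₁₂ hx₂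
  have hT₂ : ContinuousOn (fun y => x₂ - h₂ y + h₁ y) (Icc 0 1) :=
    (continuousOn_const.sub hg₂.continuousOn).congr fun s _ => by
      simp only [Pi.sub_apply]; ring
  have hT₃ : ContinuousOn (fun y => x₂ - h₂ y + y) (Icc 0 1) :=
    (continuousOn_const.add hg₃.continuousOn).congr fun s _ => by
      simp only [Pi.add_apply]; ring
  have hsum : densityOnUnit h₁' + densityOnUnit (fun y => h₂' y - h₁' y) +
      densityOnUnit (fun y => 1 - h₂' y) = volume.restrict (Icc 0 1) :=
    densityOnUnit_add_add_eq_volume hg₁.continuousOn_deriv hg₂.continuousOn_deriv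
      hg₁.deriv_nonneg hg₂.deriv_nonneg hg₃.deriv_nonneg fun s _ => by ring
  refine ⟨⟨?_⟩, fun B hB hBI => ?_, fun B hB hBI => ?_⟩
  · rw [threePieceMeasure, Measure.add_apply, Measure.add_apply, graphMeasure_univ hg₁.continuousOn,
      graphMeasure_univ hT₂, graphMeasure_univ hT₃, ← Measure.add_apply, ← Measure.add_apply, hsum,
      Measure.restrict_apply_univ, Real.volume_Icc, sub_zero, ENNReal.ofReal_one]
  · rw [threePieceMeasure_prod_Icc hg₁ hg₂ hg₃ hh₁0 hh₂0 hI hB, hh₂1, sub_self, zero_add,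
      zero_add, ← Measure.restrict_apply hB, ← Measure.restrict_apply hB,
      ← Measure.restrict_apply hB, ← Measure.add_apply, ← Measure.add_apply,
      volume_restrict_Icc_add_Icc hx₁ (by linarith),
      volume_restrict_Icc_add_Icc (by linarith) (by linarith),
      Measure.restrict_apply hB, inter_eq_left.2 hBI]
  · have hM₁ : MapsTo h₁ (Icc 0 1) (Icc 0 1) := fun s hs => by
      obtain ⟨⟨l, u⟩, -, -⟩ := hb s hs; constructor <;> linarith
    have hM₂ : MapsTo (fun y => x₂ - h₂ y + h₁ y) (Icc 0 1) (Icc 0 1) := fun s hs => by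
      obtain ⟨-, ⟨l, u⟩, -⟩ := hb s hs; constructor <;> linarith
    have hM₃ : MapsTo (fun y => x₂ - h₂ y + y) (Icc 0 1) (Icc 0 1) := fun s hs => by
      obtain ⟨-, -, ⟨l, u⟩⟩ := hb s hs; constructor <;> linarith
    rw [threePieceMeasure, Measure.add_apply, Measure.add_apply,
      graphMeasure_Icc_prod hg₁.continuousOn hM₁ hB hBI, graphMeasure_Icc_prod hT₂ hM₂ hB hBI,
      graphMeasure_Icc_prod hT₃ hM₃ hB hBI, ← Measure.add_apply, ← Measure.add_apply, hsum,
      Measure.restrict_apply hB, inter_eq_left.2 hBI]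

theorem threePieceMeasure_Icc_prod_Icc (hg₁ : HasNonnegContinuousDerivOn h₁ h₁' (Icc 0 1))
    (hg₂ : HasNonnegContinuousDerivOn (fun s => h₂ s - h₁ s) (fun s => h₂' s - h₁' s) (Icc 0 1))
    (hg₃ : HasNonnegContinuousDerivOn (fun s => s - h₂ s) (fun s => 1 - h₂' s) (Icc 0 1))
    (hh₁0 : h₁ 0 = 0) (hh₂0 : h₂ 0 = 0) (hh₂1 : h₂ 1 = x₂) {x y : ℝ} (hy : y ∈ Icc (0:ℝ) 1) :
    (x ∈ Icc 0 (h₁ 1) →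
      (threePieceMeasure x₂ h₁ h₂ h₁' h₂' (Icc 0 x ×ˢ Icc 0 y)).toReal = min x (h₁ y)) ∧
    (x ∈ Icc (h₁ 1) x₂ →
      (threePieceMeasure x₂ h₁ h₂ h₁' h₂' (Icc 0 x ×ˢ Icc 0 y)).toReal =
        max (x + h₂ y - x₂) (h₁ y)) ∧
    (x ∈ Icc x₂ 1 →
      (threePieceMeasure x₂ h₁ h₂ h₁' h₂' (Icc 0 x ×ˢ Icc 0 y)).toReal =
        min (x - x₂ + h₂ y) y) := by
  have hb := fun s (hs : s ∈ Icc (0:ℝ) 1) => mem_Icc_of_three_pieces hg₁ hg₂ hg₃ hh₁0 hh₂0 hh₂1 hs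
  obtain ⟨⟨hx₁, -⟩, ⟨hx₁₂, -⟩, -⟩ := hb 1 (right_mem_Icc.2 zero_le_one)
  obtain ⟨⟨u₀, u₁⟩, ⟨v₀, v₁⟩, ⟨w₀, -⟩⟩ := hb y hy
  rw [hh₂1] at hx₁₂
  rw [threePieceMeasure_prod_Icc hg₁ hg₂ hg₃ hh₁0 hh₂0 hy measurableSet_Icc, Icc_inter_Icc,
    Icc_inter_Icc, Icc_inter_Icc, Real.volume_Icc, Real.volume_Icc, Real.volume_Icc,
    ENNReal.toReal_add (by finiteness) ENNReal.ofReal_ne_top,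
    ENNReal.toReal_add ENNReal.ofReal_ne_top ENNReal.ofReal_ne_top, ENNReal.toReal_ofReal',
    ENNReal.toReal_ofReal', ENNReal.toReal_ofReal']
  clear hb hg₁ hg₂ hg₃
  refine ⟨fun hx => ?_, fun hx => ?_, fun hx => ?_⟩ <;> rw [mem_Icc] at hx <;> grind

end ThreePiece

theorem stmt6_general (x₁ x₂ : ℝ)
    (h₁ h₂ h₁' h₂' : ℝ → ℝ)
    (hd₁ : ∀ y ∈ Icc (0:ℝ) 1, HasDerivWithinAt h₁ (h₁' y) (Icc 0 1) y)
    (hd₂ : ∀ y ∈ Icc (0:ℝ) 1, HasDerivWithinAt h₂ (h₂' y) (Icc 0 1) y)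
    (hc₁ : ContinuousOn h₁' (Icc (0:ℝ) 1)) (hc₂ : ContinuousOn h₂' (Icc (0:ℝ) 1))
    (hh₁0 : h₁ 0 = 0) (hh₂0 : h₂ 0 = 0) (hh₁1 : h₁ 1 = x₁) (hh₂1 : h₂ 1 = x₂)
    (hbound : ∀ y ∈ Icc (0:ℝ) 1, 0 ≤ h₁' y ∧ h₁' y ≤ h₂' y ∧ h₂' y ≤ 1)
    (γ : Measure (ℝ × ℝ))
    (hγ : γ =
      Measure.map (fun y => (h₁ y, y))
        ((volume.restrict (Icc (0:ℝ) 1)).withDensity fun y => ENNReal.ofReal (h₁' y)) +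
      Measure.map (fun y => (x₂ - h₂ y + h₁ y, y))
        ((volume.restrict (Icc (0:ℝ) 1)).withDensity fun y => ENNReal.ofReal (h₂' y - h₁' y)) +
      Measure.map (fun y => (x₂ - h₂ y + y, y))
        ((volume.restrict (Icc (0:ℝ) 1)).withDensity fun y => ENNReal.ofReal (1 - h₂' y))) :
    IsDoublyStochastic γ ∧
    ∀ x ∈ Icc (0:ℝ) 1, ∀ y ∈ Icc (0:ℝ) 1,
      (x ∈ Icc 0 x₁ → (γ (Icc 0 x ×ˢ Icc 0 y)).toReal = min x (h₁ y)) ∧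
      (x ∈ Icc x₁ x₂ → (γ (Icc 0 x ×ˢ Icc 0 y)).toReal = max (x + h₂ y - x₂) (h₁ y)) ∧
      (x ∈ Icc x₂ 1 → (γ (Icc 0 x ×ˢ Icc 0 y)).toReal = min (x - x₂ + h₂ y) y) := by
  have hg₁ : HasNonnegContinuousDerivOn h₁ h₁' (Icc 0 1) :=
    ⟨hd₁, hc₁, fun y hy => (hbound y hy).1⟩
  have hg₂ : HasNonnegContinuousDerivOn (fun s => h₂ s - h₁ s) (fun s => h₂' s - h₁' s)
      (Icc 0 1) :=
    ⟨fun y hy => (hd₂ y hy).sub (hd₁ y hy), hc₂.sub hc₁,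
      fun y hy => sub_nonneg.2 (hbound y hy).2.1⟩
  have hg₃ : HasNonnegContinuousDerivOn (fun s => s - h₂ s) (fun s => 1 - h₂' s) (Icc 0 1) :=
    ⟨fun y hy => (hasDerivWithinAt_id y _).sub (hd₂ y hy), continuousOn_const.sub hc₂,
      fun y hy => sub_nonneg.2 (hbound y hy).2.2⟩
  obtain rfl : γ = threePieceMeasure x₂ h₁ h₂ h₁' h₂' := hγ
  subst hh₁1
  exact ⟨isDoublyStochastic_threePieceMeasure hg₁ hg₂ hg₃ hh₁0 hh₂0 hh₂1,
    fun _ _ _ hy => threePieceMeasure_Icc_prod_Icc hg₁ hg₂ hg₃ hh₁0 hh₂0 hh₂1 hy⟩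

theorem stmt6 (x₁ x₂ : ℝ) (hx₁ : 0 < x₁) (hx₁₂ : x₁ < x₂) (hx₂ : x₂ < 1)
    (h₁ h₂ h₁' h₂' : ℝ → ℝ)
    (hd₁ : ∀ y ∈ Icc (0:ℝ) 1, HasDerivWithinAt h₁ (h₁' y) (Icc 0 1) y)
    (hd₂ : ∀ y ∈ Icc (0:ℝ) 1, HasDerivWithinAt h₂ (h₂' y) (Icc 0 1) y)
    (hc₁ : ContinuousOn h₁' (Icc (0:ℝ) 1)) (hc₂ : ContinuousOn h₂' (Icc (0:ℝ) 1))
    (hh₁0 : h₁ 0 = 0) (hh₂0 : h₂ 0 = 0) (hh₁1 : h₁ 1 = x₁) (hh₂1 : h₂ 1 = x₂)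
    (hbound : ∀ y ∈ Icc (0:ℝ) 1, 0 ≤ h₁' y ∧ h₁' y ≤ h₂' y ∧ h₂' y ≤ 1)
    (γ : Measure (ℝ × ℝ))
    (hγ : γ =
      Measure.map (fun y => (h₁ y, y))
        ((volume.restrict (Icc (0:ℝ) 1)).withDensity fun y => ENNReal.ofReal (h₁' y)) +
      Measure.map (fun y => (x₂ - h₂ y + h₁ y, y))
        ((volume.restrict (Icc (0:ℝ) 1)).withDensity fun y => ENNReal.ofReal (h₂' y - h₁' y)) +
      Measure.map (fun y => (x₂ - h₂ y + y, y))
        ((volume.restrict (Icc (0:ℝ) 1)).withDensity fun y => ENNReal.ofReal (1 - h₂' y))) :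
    IsDoublyStochastic γ ∧
    ∀ x ∈ Icc (0:ℝ) 1, ∀ y ∈ Icc (0:ℝ) 1,
      (x ∈ Icc 0 x₁ → (γ (Icc 0 x ×ˢ Icc 0 y)).toReal = min x (h₁ y)) ∧
      (x ∈ Icc x₁ x₂ → (γ (Icc 0 x ×ˢ Icc 0 y)).toReal = max (x + h₂ y - x₂) (h₁ y)) ∧
      (x ∈ Icc x₂ 1 → (γ (Icc 0 x ×ˢ Icc 0 y)).toReal = min (x - x₂ + h₂ y) y) :=
  stmt6_general x₁ x₂ h₁ h₂ h₁' h₂' hd₁ hd₂ hc₁ hc₂ hh₁0 hh₂0 hh₁1 hh₂1 hbound γ hγ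
end

section
/- Let 0 < x₁ < x₂ < 1 and define h₁(y) = x₁·y·(1 − log y) and h₂(y) = x₂·y·(1 − log y) for y ∈ (0,1]. Then the (improper/Lebesgue) integral over (0,1) of G(y) = (h₁(y)/x₁)·y·h₁'(y) + ((h₂(y) − h₁(y))/(x₂ − x₁))·y·(h₂'(y) − h₁'(y)) + ((y − h₂(y))/(1 − x₂))·y·(1 − h₂'(y)) equals 1/3 − x₂/(27(1 − x₂)). In particular, this value is strictly smaller than 1/3, the value of the same integral obtained when h₁(y) = x₁·y and h₂(y) = x₂·y (in which case G(y) = y²). -/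
open Set Real MeasureTheory intervalIntegral

/-!
With `c = x₂ / (1 - x₂)` the integrand collapses to `y² + c (y² log y + y² log² y)`: the
contributions of `x₁` cancel. The logarithmic part has the primitive
`y³ log² y / 3 + y³ log y / 9 - y³ / 27`, which extends continuously to `0` with value `0`, so
its integral over `(0, 1)` is `-1/27` and the whole integral is `1/3 - c/27`.
-/

/-- Write `y ^ n * log y ^ m = y ^ (n - m) * (y * log y) ^ m`; `y * log y` is continuous at `0`
because of the convention `log 0 = 0`. -/
lemma continuous_pow_mul_log_pow {n m : ℕ} (hmn : m ≤ n) :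
    Continuous fun y : ℝ => y ^ n * log y ^ m := by
  have hrw : (fun y : ℝ => y ^ n * log y ^ m) = fun y => y ^ (n - m) * (y * log y) ^ m := by
    funext y
    rw [mul_pow, ← mul_assoc, ← pow_add, Nat.sub_add_cancel hmn]
  rw [hrw]
  exact (continuous_pow _).mul (continuous_mul_log.pow m)

lemma hasDerivAt_primitive_sq_mul_log_add_sq_mul_log_sq {x : ℝ} (hx : x ≠ 0) :
    HasDerivAt (fun y : ℝ => y ^ 3 * log y ^ 2 / 3 + y ^ 3 * log y / 9 - y ^ 3 / 27)
      (x ^ 2 * log x + x ^ 2 * log x ^ 2) x := by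
  have hlog : HasDerivAt log x⁻¹ x := hasDerivAt_log hx
  have hcube : HasDerivAt (fun y : ℝ => y ^ 3) (3 * x ^ 2) x := by
    simpa using hasDerivAt_pow 3 x
  have hlog_sq : HasDerivAt (fun y => log y ^ 2) (2 * log x * x⁻¹) x :=
    (hlog.pow 2).congr_deriv (by ring)
  refine ((((hcube.mul hlog_sq).div_const 3).add ((hcube.mul hlog).div_const 9)).sub
    (hcube.div_const 27)).congr_deriv ?_
  field_simp
  ring

lemma continuous_sq_mul_log_add_sq_mul_log_sq :
    Continuous fun y : ℝ => y ^ 2 * log y + y ^ 2 * log y ^ 2 := by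
  have h₁ := continuous_pow_mul_log_pow (n := 2) (m := 1) (by norm_num)
  have h₂ := continuous_pow_mul_log_pow (n := 2) (m := 2) le_rfl
  simp only [pow_one] at h₁
  fun_prop

lemma integral_sq_mul_log_add_sq_mul_log_sq :
    ∫ y in (0 : ℝ)..1, (y ^ 2 * log y + y ^ 2 * log y ^ 2) = -1 / 27 := by
  have hcont :
      Continuous fun y : ℝ => y ^ 3 * log y ^ 2 / 3 + y ^ 3 * log y / 9 - y ^ 3 / 27 := by
    have h₁ := continuous_pow_mul_log_pow (n := 3) (m := 1) (by norm_num)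
    have h₂ := continuous_pow_mul_log_pow (n := 3) (m := 2) (by norm_num)
    simp only [pow_one] at h₁
    fun_prop
  rw [integral_eq_sub_of_hasDerivAt_of_le zero_le_one hcont.continuousOn
    (fun x hx => hasDerivAt_primitive_sq_mul_log_add_sq_mul_log_sq hx.1.ne')
    (continuous_sq_mul_log_add_sq_mul_log_sq.intervalIntegrable 0 1)]
  norm_num

theorem stmt10 (x₁ x₂ : ℝ) (hx₁ : 0 < x₁) (hx₁₂ : x₁ < x₂) (hx₂ : x₂ < 1) :
    (∫ y in Ioo (0:ℝ) 1,
      ((x₁ * y * (1 - log y)) / x₁) * y * (-x₁ * log y) +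
      ((x₂ * y * (1 - log y) - x₁ * y * (1 - log y)) / (x₂ - x₁)) * y *
        ((-x₂ * log y) - (-x₁ * log y)) +
      ((y - x₂ * y * (1 - log y)) / (1 - x₂)) * y * (1 - (-x₂ * log y)))
      = 1 / 3 - x₂ / (27 * (1 - x₂)) ∧
    (∫ y in Ioo (0:ℝ) 1,
      ((x₁ * y) / x₁) * y * x₁ +
      ((x₂ * y - x₁ * y) / (x₂ - x₁)) * y * (x₂ - x₁) +
      ((y - x₂ * y) / (1 - x₂)) * y * (1 - x₂)) = 1 / 3 ∧
    (∀ y ∈ Ioo (0:ℝ) 1,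
      ((x₁ * y) / x₁) * y * x₁ +
      ((x₂ * y - x₁ * y) / (x₂ - x₁)) * y * (x₂ - x₁) +
      ((y - x₂ * y) / (1 - x₂)) * y * (1 - x₂) = y ^ 2) ∧
    1 / 3 - x₂ / (27 * (1 - x₂)) < 1 / 3 := by
  have hx₁_ne : x₁ ≠ 0 := hx₁.ne'
  have hx₂₁_ne : x₂ - x₁ ≠ 0 := (sub_pos.2 hx₁₂).ne'
  have h1x₂ : 0 < 1 - x₂ := sub_pos.2 hx₂
  have hlinear : ∀ y : ℝ,
      ((x₁ * y) / x₁) * y * x₁ + ((x₂ * y - x₁ * y) / (x₂ - x₁)) * y * (x₂ - x₁) +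
        ((y - x₂ * y) / (1 - x₂)) * y * (1 - x₂) = y ^ 2 := by
    intro y
    field_simp
    ring
  refine ⟨?_, ?_, fun y _ => hlinear y, ?_⟩
  · rw [← integral_Ioc_eq_integral_Ioo, ← integral_of_le zero_le_one, integral_congr
        (g := fun y => y ^ 2 + x₂ / (1 - x₂) * (y ^ 2 * log y + y ^ 2 * log y ^ 2))
        fun y _ => by field_simp; ring,
      intervalIntegral.integral_add (intervalIntegrable_pow 2)
        ((continuous_sq_mul_log_add_sq_mul_log_sq.intervalIntegrable 0 1).const_mul _),
      intervalIntegral.integral_const_mul, integral_pow, integral_sq_mul_log_add_sq_mul_log_sq]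
    field_simp
    ring
  · rw [← integral_Ioc_eq_integral_Ioo, ← integral_of_le zero_le_one]
    simp_rw [hlinear]
    norm_num
  · have : 0 < x₂ / (27 * (1 - x₂)) := div_pos (hx₁.trans hx₁₂) (by positivity)
    linarith
end

section
/- Let φ : [0,2] → ℝ be twice continuously differentiable and let k ∈ (0,2) be such that φ''(t) < 0 for t ∈ [0,k) and φ''(t) > 0 for t ∈ (k,2]. Let β ∈ (0,1) satisfy φ(2β) − φ(β) = β·φ'(β). Then β < k < 2β, and there exists τ ∈ (β, 2β) with φ'(τ) = φ'(β) and k < τ. -/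
open Set

theorem stmt12 (φ φ' φ'' : ℝ → ℝ)
    (hd1 : ∀ t ∈ Icc (0:ℝ) 2, HasDerivWithinAt φ (φ' t) (Icc 0 2) t)
    (hd2 : ∀ t ∈ Icc (0:ℝ) 2, HasDerivWithinAt φ' (φ'' t) (Icc 0 2) t)
    (hc : ContinuousOn φ'' (Icc (0:ℝ) 2))
    (k : ℝ) (hk : k ∈ Ioo (0:ℝ) 2)
    (hconc : ∀ t ∈ Ico (0:ℝ) k, φ'' t < 0)
    (hconv : ∀ t ∈ Ioc k 2, 0 < φ'' t)
    (β : ℝ) (hβ : β ∈ Ioo (0:ℝ) 1)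
    (hβeq : φ (2 * β) - φ β = β * φ' β)
    : β < k ∧ k < 2 * β ∧
      ∃ τ ∈ Ioo β (2 * β), φ' τ = φ' β ∧ k < τ := by
  obtain ⟨hβ0, hβ1⟩ := hβ
  have hβlt : β < 2 * β := by linarith
  have hsub : Icc β (2*β) ⊆ Icc (0:ℝ) 2 := Icc_subset_Icc (by linarith) (by linarith)
  have hmem : ∀ t ∈ Ioo β (2*β), HasDerivAt φ (φ' t) t := by
    intro t ht
    exact (hd1 t (hsub ⟨ht.1.le, ht.2.le⟩)).hasDerivAt
      (Icc_mem_nhds (by linarith [ht.1]) (by linarith [ht.2]))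
  have hcontφ : ContinuousOn φ (Icc β (2*β)) :=
    fun t ht => ((hd1 t (hsub ht)).continuousWithinAt).mono hsub
  obtain ⟨ξ, hξ, hξeq⟩ := exists_hasDerivAt_eq_slope φ φ' hβlt hcontφ hmem
  have hξval : φ' ξ = φ' β := by
    rw [hξeq, hβeq, show (2*β - β) = β by ring]
    field_simp
  -- Rolle on φ' between β and ξ
  have hsub2 : Icc β ξ ⊆ Icc β (2*β) := Icc_subset_Icc le_rfl hξ.2.le
  have hmem' : ∀ t ∈ Ioo β ξ, HasDerivAt φ' (φ'' t) t := by
    intro t ht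
    have h1 : t ∈ Icc β (2*β) := hsub2 ⟨ht.1.le, ht.2.le⟩
    exact (hd2 t (hsub h1)).hasDerivAt
      (Icc_mem_nhds (by linarith [h1.1]) (by linarith [h1.2]))
  have hcontφ' : ContinuousOn φ' (Icc β ξ) :=
    fun t ht => ((hd2 t (hsub (hsub2 ht))).continuousWithinAt).mono (hsub2.trans hsub)
  obtain ⟨c, hc2, hceq⟩ := exists_hasDerivAt_eq_slope φ' φ'' hξ.1 hcontφ' hmem'
  have hc0 : φ'' c = 0 := by
    rw [hceq, hξval]
    simp
  have hck : c = k := by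
    rcases lt_trichotomy c k with h | h | h
    · exact absurd hc0 (ne_of_lt (hconc c ⟨by linarith [hc2.1], h⟩))
    · exact h
    · exact absurd hc0 (ne_of_gt (hconv c ⟨h, by linarith [hc2.2, hξ.2]⟩))
  refine ⟨by rw [← hck]; exact hc2.1, by rw [← hck]; linarith [hc2.2, hξ.2],
    ξ, hξ, hξval, by rw [← hck]; exact hc2.2⟩
end
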